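/- arXiv:2209.08856 — 5 statements merged into one kernel-verified Lean document; each statement's English description precedes it below -/
import Mathlib

section
/- Let s be a scoring system. For every ranking profile P over a finite candidate set C and every ranking ≻ of C, we have ≻ ∈ Sequential-s-Winner(P) if and only if rev(≻) ∈ Sequential-s*-Loser(rev(P)). -/
/-!
Reversing a ranking of `m` candidates sends position `i` to `m - i + 1`, so the `s*`-score of a
candidate in `rev(P)` is exactly minus its `s`-score in `P`: the `s`-winners of `P` are the
`s*`-losers of `rev(P)`. Since restricting a profile commutes with reversing it, the two sequential
procedures then make the same choice at every step.
-/

open Finset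

/-- A scoring system: for each number `m` of candidates, `s m i` is the score awarded
to the candidate in (1-indexed) position `i`. -/
abbrev ScoringSystem : Type := ℕ → ℕ → ℝ

variable {α : Type*}

/-- A ranking of the finite candidate set `C`: a duplicate-free list consisting of
exactly the candidates of `C`, earlier in the list meaning more preferred. -/
def IsRanking [DecidableEq α] (C : Finset α) (r : List α) : Prop :=
  r.Nodup ∧ r.toFinset = C

/-- A ranking profile over `C`: a finite list of rankings of `C`. -/
def IsProfile [DecidableEq α] (C : Finset α) (P : List (List α)) : Prop :=
  ∀ r ∈ P, IsRanking C r

/-- The (1-indexed) position of candidate `c` in ranking `r`. -/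
def rpos [DecidableEq α] (r : List α) (c : α) : ℕ :=
  r.idxOf c + 1

/-- The `s`-score of candidate `c` in the profile `P` over candidate set `C`. -/
def scoreOf [DecidableEq α] (s : ScoringSystem) (C : Finset α)
    (P : List (List α)) (c : α) : ℝ :=
  (P.map fun r => s C.card (rpos r c)).sum

/-- `c` is an `s`-winner of `P` (a candidate of maximum `s`-score). -/
def IsWinner [DecidableEq α] (s : ScoringSystem) (C : Finset α)
    (P : List (List α)) (c : α) : Prop :=
  c ∈ C ∧ ∀ d ∈ C, scoreOf s C P d ≤ scoreOf s C P c

/-- `c` is an `s`-loser of `P` (a candidate of minimum `s`-score). -/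
def IsLoser [DecidableEq α] (s : ScoringSystem) (C : Finset α)
    (P : List (List α)) (c : α) : Prop :=
  c ∈ C ∧ ∀ d ∈ C, scoreOf s C P c ≤ scoreOf s C P d

/-- Restriction of a profile to the candidate subset `C'`. -/
def restrictProfile [DecidableEq α] (C' : Finset α) (P : List (List α)) :
    List (List α) :=
  P.map fun r => r.filter (fun x => decide (x ∈ C'))

/-- Auxiliary recursion for Sequential-`s`-Winner, consuming the ranking from the top. -/
def SeqWinnerSel [DecidableEq α] (s : ScoringSystem) :
    List α → Finset α → List (List α) → Prop
  | [], C, _ => C = ∅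
  | c :: rest, C, P =>
      IsWinner s C P c ∧
        SeqWinnerSel s rest (C.erase c) (restrictProfile (C.erase c) P)

/-- `SeqWinner s C P r` means that the ranking `r` belongs to
`Sequential-s-Winner(P)` for the profile `P` over candidate set `C`. -/
def SeqWinner [DecidableEq α] (s : ScoringSystem) (C : Finset α)
    (P : List (List α)) (r : List α) : Prop :=
  SeqWinnerSel s r C P

/-- Auxiliary recursion for Sequential-`s`-Loser, consuming the ranking from the bottom. -/
def SeqLoserSel [DecidableEq α] (s : ScoringSystem) :
    List α → Finset α → List (List α) → Prop
  | [], C, _ => C = ∅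
  | c :: rest, C, P =>
      IsLoser s C P c ∧
        SeqLoserSel s rest (C.erase c) (restrictProfile (C.erase c) P)

/-- `SeqLoser s C P r` means that the ranking `r` belongs to
`Sequential-s-Loser(P)` for the profile `P` over candidate set `C`. -/
def SeqLoser [DecidableEq α] (s : ScoringSystem) (C : Finset α)
    (P : List (List α)) (r : List α) : Prop :=
  SeqLoserSel s r.reverse C P

/-- The scoring system `s*`: `(s*)^(m)_i = -(s^(m)_{m-i+1})`. -/
def dualSystem (s : ScoringSystem) : ScoringSystem :=
  fun m i => -(s m (m - i + 1))

/-- Reverse every ranking of a profile. -/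
def revProfile (P : List (List α)) : List (List α) :=
  P.map List.reverse

theorem List.Nodup.idxOf_reverse [BEq α] [LawfulBEq α] {l : List α} (hl : l.Nodup) {c : α}
    (hc : c ∈ l) : l.reverse.idxOf c = l.length - 1 - l.idxOf c := by
  have hi : l.idxOf c < l.length := List.idxOf_lt_length_iff.2 hc
  have hj : l.length - 1 - l.idxOf c < l.reverse.length := by simp only [List.length_reverse]; omega
  have hget : l.reverse[l.length - 1 - l.idxOf c] = c := by
    rw [List.getElem_reverse]
    convert List.getElem_idxOf hi using 2
    omega
  simpa only [hget] using (List.nodup_reverse.2 hl).idxOf_getElem _ hj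

section

variable [DecidableEq α] {C C' : Finset α} {P : List (List α)} {c : α}

theorem IsRanking.dualSystem_rpos_reverse (s : ScoringSystem) {r : List α} (hr : IsRanking C r)
    (hc : c ∈ C) : dualSystem s C.card (rpos r.reverse c) = -s C.card (rpos r c) := by
  obtain ⟨hnodup, hset⟩ := hr
  have hcr : c ∈ r := by rwa [← List.mem_toFinset, hset]
  have hlen : r.length = C.card := by rw [← hset, List.toFinset_card_of_nodup hnodup]
  have hi : r.idxOf c < r.length := List.idxOf_lt_length_iff.2 hcr
  simp only [dualSystem, rpos, hnodup.idxOf_reverse hcr]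
  congr 2
  omega

theorem scoreOf_dualSystem_revProfile (s : ScoringSystem) (hP : IsProfile C P) (hc : c ∈ C) :
    scoreOf (dualSystem s) C (revProfile P) c = -scoreOf s C P c := by
  rw [scoreOf, scoreOf, revProfile, List.sum_neg, List.map_map, List.map_map]
  exact congrArg List.sum <| List.map_congr_left fun r hr =>
    (hP r hr).dualSystem_rpos_reverse s hc

theorem isLoser_dualSystem_revProfile_iff (s : ScoringSystem) (hP : IsProfile C P) :
    IsLoser (dualSystem s) C (revProfile P) c ↔ IsWinner s C P c :=
  and_congr_right fun hc => forall₂_congr fun d hd => by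
    rw [scoreOf_dualSystem_revProfile s hP hc, scoreOf_dualSystem_revProfile s hP hd,
      neg_le_neg_iff]

theorem restrictProfile_revProfile (C' : Finset α) (P : List (List α)) :
    restrictProfile C' (revProfile P) = revProfile (restrictProfile C' P) := by
  simp only [restrictProfile, revProfile, List.map_map, Function.comp_def, List.filter_reverse]

theorem IsProfile.restrictProfile (hP : IsProfile C P) (hsub : C' ⊆ C) :
    IsProfile C' (restrictProfile C' P) := by
  simp only [IsProfile, _root_.restrictProfile, List.mem_map]
  rintro _ ⟨r, hr, rfl⟩
  obtain ⟨hnodup, hset⟩ := hP r hr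
  refine ⟨hnodup.filter _, ?_⟩
  ext x
  simp only [List.toFinset_filter, mem_filter, hset, decide_eq_true_eq]
  exact ⟨And.right, fun hx => ⟨hsub hx, hx⟩⟩

theorem seqWinnerSel_iff_seqLoserSel_dualSystem_revProfile (s : ScoringSystem) (r : List α)
    (hP : IsProfile C P) :
    SeqWinnerSel s r C P ↔ SeqLoserSel (dualSystem s) r C (revProfile P) := by
  induction r generalizing C P with
  | nil => rfl
  | cons c rest ih =>
    simp only [SeqWinnerSel, SeqLoserSel, isLoser_dualSystem_revProfile_iff s hP,
      restrictProfile_revProfile]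
    exact and_congr_right' (ih (hP.restrictProfile (C.erase_subset c)))

end

theorem seqWinner_iff_seqLoser_rev_general [DecidableEq α] (s : ScoringSystem)
    (C : Finset α) (P : List (List α)) (hP : IsProfile C P)
    (r : List α) :
    SeqWinner s C P r ↔ SeqLoser (dualSystem s) C (revProfile P) r.reverse := by
  rw [SeqWinner, SeqLoser, List.reverse_reverse]
  exact seqWinnerSel_iff_seqLoserSel_dualSystem_revProfile s r hP

/-- Lemma 1 of the paper.
`≻ ∈ Sequential-s-Winner(P)` iff `rev(≻) ∈ Sequential-s*-Loser(rev(P))`. -/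
theorem seqWinner_iff_seqLoser_rev [DecidableEq α] (s : ScoringSystem)
    (C : Finset α) (P : List (List α)) (hP : IsProfile C P)
    (r : List α) (hr : IsRanking C r) :
    SeqWinner s C P r ↔ SeqLoser (dualSystem s) C (revProfile P) r.reverse :=
  seqWinner_iff_seqLoser_rev_general s C P hP r
end

section
/- For every scoring system s, Sequential-s-Winner satisfies reinforcement at the top: for all ranking profiles P and P' over the same finite candidate set C, if the intersection of the set of candidates ranked first in some ranking of Sequential-s-Winner(P) with the set of candidates ranked first in some ranking of Sequential-s-Winner(P') is nonempty, then the set of candidates ranked first in some ranking of Sequential-s-Winner(P + P') equals this intersection, where P + P' denotes the concatenation of the two profiles. -/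
open Finset

variable {α : Type*}

/-!
The candidates ranked first by Sequential-`s`-Winner are exactly the `s`-winners, since every
winner extends to a full sequential ranking of the remaining candidates. Scores add up over
concatenated profiles, so if `w` wins both `P` and `P'`, the maximum score on `P + P'` is the
sum of the two maxima, and it is attained exactly by the candidates that win both profiles.
-/

section

variable [DecidableEq α] {s : ScoringSystem} {C : Finset α}

theorem exists_seqWinnerSel (s : ScoringSystem) (C : Finset α) (P : List (List α)) :
    ∃ r, SeqWinnerSel s r C P := by
  induction C using Finset.strongInduction generalizing P with
  | _ C ih =>
    rcases C.eq_empty_or_nonempty with hC | hC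
    · exact ⟨[], hC⟩
    · obtain ⟨c, hc, hmax⟩ := C.exists_max_image (scoreOf s C P) hC
      obtain ⟨r, hr⟩ := ih (C.erase c) (Finset.erase_ssubset hc) (restrictProfile (C.erase c) P)
      exact ⟨c :: r, ⟨hc, hmax⟩, hr⟩

theorem setOf_head_seqWinner_eq (s : ScoringSystem) (C : Finset α) (P : List (List α)) :
    {c | ∃ r, SeqWinner s C P r ∧ r.head? = some c} = {c | IsWinner s C P c} := by
  ext c
  constructor
  · rintro ⟨_ | ⟨a, rest⟩, hr, hhead⟩
    · cases hhead
    · cases hhead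
      exact hr.1
  · intro hc
    obtain ⟨r, hr⟩ := exists_seqWinnerSel s (C.erase c) (restrictProfile (C.erase c) P)
    exact ⟨c :: r, ⟨hc, hr⟩, rfl⟩

theorem scoreOf_append (s : ScoringSystem) (C : Finset α) (P P' : List (List α)) (c : α) :
    scoreOf s C (P ++ P') c = scoreOf s C P c + scoreOf s C P' c := by
  simp [scoreOf]

theorem IsWinner.append {P P' : List (List α)} {c : α} (hc : IsWinner s C P c)
    (hc' : IsWinner s C P' c) : IsWinner s C (P ++ P') c := by
  refine ⟨hc.1, fun d hd => ?_⟩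
  rw [scoreOf_append, scoreOf_append]
  exact add_le_add (hc.2 d hd) (hc'.2 d hd)

theorem IsWinner.of_append {P P' : List (List α)} {w c : α} (hw : IsWinner s C P w)
    (hw' : IsWinner s C P' w) (hc : IsWinner s C (P ++ P') c) :
    IsWinner s C P c ∧ IsWinner s C P' c := by
  have hsum := hc.2 w hw.1
  rw [scoreOf_append, scoreOf_append] at hsum
  have hle := hw.2 c hc.1
  have hle' := hw'.2 c hc.1
  have heq : scoreOf s C P c = scoreOf s C P w := by linarith
  have heq' : scoreOf s C P' c = scoreOf s C P' w := by linarith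
  exact ⟨⟨hc.1, fun d hd => heq ▸ hw.2 d hd⟩, ⟨hc.1, fun d hd => heq' ▸ hw'.2 d hd⟩⟩

end

theorem seqWinner_reinforcement_at_top_general [DecidableEq α] (s : ScoringSystem)
    (C : Finset α) (P P' : List (List α))
    (hne : ({c | ∃ r, SeqWinner s C P r ∧ r.head? = some c} ∩
      {c | ∃ r, SeqWinner s C P' r ∧ r.head? = some c}).Nonempty) :
    {c | ∃ r, SeqWinner s C (P ++ P') r ∧ r.head? = some c} =
      {c | ∃ r, SeqWinner s C P r ∧ r.head? = some c} ∩
        {c | ∃ r, SeqWinner s C P' r ∧ r.head? = some c} := by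
  simp only [setOf_head_seqWinner_eq] at hne ⊢
  obtain ⟨w, hw, hw'⟩ := hne
  ext c
  exact ⟨fun hc => IsWinner.of_append hw hw' hc, fun ⟨hc, hc'⟩ => hc.append hc'⟩

/-- Sequential-`s`-Winner satisfies reinforcement at the top:
if some candidate can be ranked first on both `P` and `P'`, then the set of candidates
that can be ranked first on the concatenated profile `P ++ P'` is exactly the
intersection of the two such sets. -/
theorem seqWinner_reinforcement_at_top [DecidableEq α] (s : ScoringSystem)
    (C : Finset α) (P P' : List (List α))
    (hP : IsProfile C P) (hP' : IsProfile C P')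
    (hne : ({c | ∃ r, SeqWinner s C P r ∧ r.head? = some c} ∩
      {c | ∃ r, SeqWinner s C P' r ∧ r.head? = some c}).Nonempty) :
    {c | ∃ r, SeqWinner s C (P ++ P') r ∧ r.head? = some c} =
      {c | ∃ r, SeqWinner s C P r ∧ r.head? = some c} ∩
        {c | ∃ r, SeqWinner s C P' r ∧ r.head? = some c} :=
  seqWinner_reinforcement_at_top_general s C P P' hne
end

section
/- Call an edge-weighted directed graph G = (V,A) bilevel if V can be partitioned into pairwise disjoint subsets C_1, …, C_s, D_1, …, D_s (some possibly empty) such that A = (C_1 × D_1) ∪ … ∪ (C_s × D_s) with every arc having weight 2. If G is bilevel, then there exists a ranking profile with exactly 2 voters over candidate set V whose weighted majority graph is G, i.e., for all distinct u, v ∈ V, w_{uv} = 2 if (u,v) ∈ A, w_{uv} = −2 if (v,u) ∈ A, and w_{uv} = 0 otherwise. -/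
open Finset

variable {α : Type*}

/-- The weighted-majority-graph weight `w_{uv}` of the profile `P`:
the number of voters preferring `u` to `v` minus the number preferring `v` to `u`. -/
def majWeight [DecidableEq α] (P : List (List α)) (u v : α) : ℤ :=
  (P.countP (fun r => decide (rpos r u < rpos r v)) : ℤ) -
    (P.countP (fun r => decide (rpos r v < rpos r u)) : ℤ)


variable {β : Type*}


/-!
Concatenate the blocks `C₁ ∪ D₁, …, C_s ∪ D_s` in this order, each listed as `C_i` followed by
`D_i`; the second voter reads backwards the ranking obtained by swapping `C_i` and `D_i` in every
block. The two voters then order every pair of candidates from different blocks, or from the same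
side of one block, oppositely, whereas both rank each `u ∈ C_i` above each `v ∈ D_i`.
-/

namespace List

variable {β : Type*}

theorem Nodup.idxOf_lt_idxOf_iff [DecidableEq α] {l : List α} {u v : α} (hl : l.Nodup)
    (hv : v ∈ l) : l.idxOf u < l.idxOf v ↔ [u, v] <+ l := by
  induction l with
  | nil => simp at hv
  | cons a t ih =>
    obtain ⟨hat, ht⟩ := nodup_cons.1 hl
    rcases eq_or_ne v a with rfl | hva
    · have : ¬[u, v] <+ t := fun h => hat (h.subset (by simp))
      simp [sublist_cons_iff, this, hat]
    · have hvt : v ∈ t := by simpa [hva] using hv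
      rcases eq_or_ne a u with rfl | hau
      · simp [sublist_cons_iff, idxOf_cons_ne _ hva.symm, hvt]
      · simp [sublist_cons_iff, idxOf_cons_ne _ hau, idxOf_cons_ne _ hva.symm, ih ht hvt, hau.symm]

theorem Nodup.pair_sublist_swap_iff {l : List α} {u v : α} (hl : l.Nodup)
    (hu : u ∈ l) (hv : v ∈ l) (huv : u ≠ v) : [v, u] <+ l ↔ ¬[u, v] <+ l := by
  classical
  rw [← hl.idxOf_lt_idxOf_iff hu, ← hl.idxOf_lt_idxOf_iff hv]
  have : l.idxOf u ≠ l.idxOf v := fun h => huv ((idxOf_inj hu).1 h)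
  omega

theorem Nodup.pair_sublist_total {l : List α} {u v : α} (hl : l.Nodup)
    (hu : u ∈ l) (hv : v ∈ l) (huv : u ≠ v) : [u, v] <+ l ∨ [v, u] <+ l :=
  or_iff_not_imp_left.2 (hl.pair_sublist_swap_iff hu hv huv).2

theorem pair_sublist_append_of_mem {l₁ l₂ : List α} {u v : α} (hu : u ∈ l₁) (hv : v ∈ l₂) :
    [u, v] <+ l₁ ++ l₂ :=
  (singleton_sublist.2 hu).append (singleton_sublist.2 hv)

theorem sublist_flatMap_of_mem {L : List β} {i : β} (f : β → List α) (hi : i ∈ L) :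
    f i <+ L.flatMap f := by
  simpa using (singleton_sublist.2 hi).flatMap f

theorem pair_sublist_flatMap {L : List β} {i j : β} {f : β → List α} {u v : α}
    (hij : [i, j] <+ L) (hu : u ∈ f i) (hv : v ∈ f j) : [u, v] <+ L.flatMap f :=
  (pair_sublist_append_of_mem hu hv).trans (by simpa using hij.flatMap f)

theorem pair_sublist_reverse_iff {l : List α} {u v : α} :
    [u, v] <+ l.reverse ↔ [v, u] <+ l := by
  simpa using reverse_sublist (l₁ := [v, u]) (l₂ := l)

theorem pair_sublist_finRange {n : ℕ} {i j : Fin n} (hij : i < j) : [i, j] <+ finRange n := by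
  rwa [← (nodup_finRange n).idxOf_lt_idxOf_iff (mem_finRange j), idxOf_finRange, idxOf_finRange]

end List

section Ranking

open scoped List

variable [DecidableEq α] {C : Finset α} {r r₁ r₂ : List α} {u v : α}

theorem IsRanking.reverse (h : IsRanking C r) : IsRanking C r.reverse :=
  ⟨List.nodup_reverse.2 h.1, by rw [List.toFinset_reverse, h.2]⟩

theorem IsRanking.mem_iff (h : IsRanking C r) : u ∈ r ↔ u ∈ C := by
  rw [← h.2, List.mem_toFinset]

theorem IsRanking.rpos_lt_iff (h : IsRanking C r) (hv : v ∈ C) :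
    rpos r u < rpos r v ↔ [u, v] <+ r := by
  rw [rpos, rpos, Nat.add_lt_add_iff_right, h.1.idxOf_lt_idxOf_iff (h.mem_iff.2 hv)]

theorem IsRanking.pair_sublist_swap_iff (h : IsRanking C r) (hu : u ∈ C) (hv : v ∈ C)
    (huv : u ≠ v) : [v, u] <+ r ↔ ¬[u, v] <+ r :=
  h.1.pair_sublist_swap_iff (h.mem_iff.2 hu) (h.mem_iff.2 hv) huv

theorem majWeight_pair (h₁ : IsRanking C r₁) (h₂ : IsRanking C r₂) (hu : u ∈ C) (hv : v ∈ C)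
    (huv : u ≠ v) :
    majWeight [r₁, r₂] u v =
      if [u, v] <+ r₁ ∧ [u, v] <+ r₂ then 2 else if [v, u] <+ r₁ ∧ [v, u] <+ r₂ then -2 else 0 := by
  simp only [majWeight, List.countP_cons, List.countP_nil, decide_eq_true_eq,
    h₁.rpos_lt_iff hu, h₁.rpos_lt_iff hv, h₂.rpos_lt_iff hu, h₂.rpos_lt_iff hv,
    h₁.pair_sublist_swap_iff hu hv huv, h₂.pair_sublist_swap_iff hu hv huv]
  split_ifs <;> simp_all

end Ranking

section BlockRanking

open scoped List

variable {s : ℕ}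

noncomputable def blockRanking (X Y : Fin s → Finset α) : List α :=
  (List.finRange s).flatMap fun i => (X i).toList ++ (Y i).toList

variable {X Y : Fin s → Finset α} {u v : α}

theorem mem_blockRanking : u ∈ blockRanking X Y ↔ ∃ i, u ∈ X i ∨ u ∈ Y i := by
  simp [blockRanking]

theorem toFinset_blockRanking [DecidableEq α] :
    (blockRanking X Y).toFinset = univ.biUnion X ∪ univ.biUnion Y := by
  ext u
  simp [mem_blockRanking, exists_or]

theorem nodup_blockRanking (hX : ∀ i j, i ≠ j → Disjoint (X i) (X j))
    (hY : ∀ i j, i ≠ j → Disjoint (Y i) (Y j)) (hXY : ∀ i j, Disjoint (X i) (Y j)) :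
    (blockRanking X Y).Nodup := by
  refine List.nodup_flatMap.2 ⟨fun i _ => ?_, (List.nodup_finRange s).imp fun {i j} hij => ?_⟩
  · exact List.nodup_append.2 ⟨nodup_toList _, nodup_toList _, fun x hx y hy hxy =>
      disjoint_left.1 (hXY i i) (mem_toList.1 hx) (hxy ▸ mem_toList.1 hy)⟩
  · intro x hx hx'
    simp only [List.mem_append, mem_toList] at hx hx'
    rcases hx with hx | hx <;> rcases hx' with hx' | hx'
    exacts [disjoint_left.1 (hX i j hij) hx hx', disjoint_left.1 (hXY i j) hx hx',
      disjoint_left.1 (hXY j i) hx' hx, disjoint_left.1 (hY i j hij) hx hx']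

theorem pair_sublist_blockRanking_of_lt {i j : Fin s} (hij : i < j) (hu : u ∈ X i ∨ u ∈ Y i)
    (hv : v ∈ X j ∨ v ∈ Y j) : [u, v] <+ blockRanking X Y :=
  List.pair_sublist_flatMap (List.pair_sublist_finRange hij) (by simpa using hu)
    (by simpa using hv)

theorem block_sublist_blockRanking (i : Fin s) :
    (X i).toList ++ (Y i).toList <+ blockRanking X Y :=
  List.sublist_flatMap_of_mem (fun k => (X k).toList ++ (Y k).toList) (List.mem_finRange i)

theorem pair_sublist_blockRanking {i : Fin s} (hu : u ∈ X i) (hv : v ∈ Y i) :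
    [u, v] <+ blockRanking X Y :=
  (List.pair_sublist_append_of_mem (mem_toList.2 hu) (mem_toList.2 hv)).trans
    (block_sublist_blockRanking i)

theorem toList_sublist_blockRanking_left (i : Fin s) : (X i).toList <+ blockRanking X Y :=
  (List.sublist_append_left _ _).trans (block_sublist_blockRanking i)

theorem toList_sublist_blockRanking_right (i : Fin s) : (Y i).toList <+ blockRanking X Y :=
  (List.sublist_append_right _ _).trans (block_sublist_blockRanking i)

theorem blockRanking_agree {i j : Fin s} (hu : u ∈ X i ∨ u ∈ Y i)
    (hv : v ∈ X j ∨ v ∈ Y j) (huv : u ≠ v) (hside : i = j → (u ∈ X i ↔ v ∈ X i)) :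
    ([u, v] <+ blockRanking X Y ∧ [u, v] <+ blockRanking Y X) ∨
      ([v, u] <+ blockRanking X Y ∧ [v, u] <+ blockRanking Y X) := by
  have of_common {l : List α} (hl : l.Nodup) (h : l <+ blockRanking X Y)
      (h' : l <+ blockRanking Y X) (hul : u ∈ l) (hvl : v ∈ l) :
      ([u, v] <+ blockRanking X Y ∧ [u, v] <+ blockRanking Y X) ∨
        ([v, u] <+ blockRanking X Y ∧ [v, u] <+ blockRanking Y X) :=
    (hl.pair_sublist_total hul hvl huv).imp (fun h₀ => ⟨h₀.trans h, h₀.trans h'⟩)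
      (fun h₀ => ⟨h₀.trans h, h₀.trans h'⟩)
  rcases lt_trichotomy i j with hij | rfl | hij
  · exact .inl ⟨pair_sublist_blockRanking_of_lt hij hu hv,
      pair_sublist_blockRanking_of_lt hij hu.symm hv.symm⟩
  · by_cases huX : u ∈ X i
    · exact of_common (nodup_toList _) (toList_sublist_blockRanking_left i)
        (toList_sublist_blockRanking_right i) (mem_toList.2 huX)
        (mem_toList.2 ((hside rfl).1 huX))
    · have huY : u ∈ Y i := by simpa [huX] using hu
      have hvY : v ∈ Y i := by simpa [mt (hside rfl).2 huX] using hv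
      exact of_common (nodup_toList _) (toList_sublist_blockRanking_right i)
        (toList_sublist_blockRanking_left i) (mem_toList.2 huY) (mem_toList.2 hvY)
  · exact .inr ⟨pair_sublist_blockRanking_of_lt hij hv hu,
      pair_sublist_blockRanking_of_lt hij hv.symm hu.symm⟩

theorem pair_sublist_blockRanking_and_swap_iff (hn : (blockRanking X Y).Nodup)
    (hn' : (blockRanking Y X).Nodup) (hu : u ∈ blockRanking X Y) (hv : v ∈ blockRanking X Y)
    (huv : u ≠ v) :
    [u, v] <+ blockRanking X Y ∧ [v, u] <+ blockRanking Y X ↔ ∃ k, u ∈ X k ∧ v ∈ Y k := by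
  refine ⟨fun ⟨h, h'⟩ => ?_, fun ⟨k, huk, hvk⟩ =>
    ⟨pair_sublist_blockRanking huk hvk, pair_sublist_blockRanking hvk huk⟩⟩
  have mem_swap {x : α} (hx : x ∈ blockRanking X Y) : x ∈ blockRanking Y X :=
    mem_blockRanking.2 ((mem_blockRanking.1 hx).imp fun _ => Or.symm)
  have hvu := (hn.pair_sublist_swap_iff hu hv huv).1
  have huv' := (hn'.pair_sublist_swap_iff (mem_swap hv) (mem_swap hu) huv.symm).1
  by_contra harc
  obtain ⟨i, hui⟩ := mem_blockRanking.1 hu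
  obtain ⟨j, hvj⟩ := mem_blockRanking.1 hv
  have hside : i = j → (u ∈ X i ↔ v ∈ X i) := by
    rintro rfl
    refine ⟨fun huX => ?_, fun hvX => ?_⟩
    · by_contra hvX
      exact harc ⟨i, huX, by simpa [hvX] using hvj⟩
    · by_contra huX
      exact hvu (pair_sublist_blockRanking hvX (by simpa [huX] using hui)) h
  rcases blockRanking_agree hui hvj huv hside with ⟨-, h₂⟩ | ⟨h₁, -⟩
  exacts [huv' h₂ h', hvu h₁ h]

end BlockRanking

/-- realizing bilevel graphs with two voters:
if the weighted digraph `(V, A)` (all arcs of weight `2`) is bilevel, then there is a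
ranking profile with exactly two voters over candidate set `V` whose weighted
majority graph is exactly the given graph. -/
theorem bilevel_two_voters [DecidableEq α] (V : Finset α) (A : Finset (α × α))
    (hbilevel : ∃ (s : ℕ) (Cp Dp : Fin s → Finset α),
      (∀ i j, i ≠ j → Disjoint (Cp i) (Cp j)) ∧
      (∀ i j, i ≠ j → Disjoint (Dp i) (Dp j)) ∧
      (∀ i j, Disjoint (Cp i) (Dp j)) ∧
      (Finset.univ.biUnion Cp ∪ Finset.univ.biUnion Dp = V) ∧
      (∀ u v : α, (u, v) ∈ A ↔ ∃ i, u ∈ Cp i ∧ v ∈ Dp i)) :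
    ∃ P : List (List α), P.length = 2 ∧ IsProfile V P ∧
      ∀ u ∈ V, ∀ v ∈ V, u ≠ v →
        majWeight P u v =
          (if (u, v) ∈ A then 2 else if (v, u) ∈ A then -2 else 0) := by
  obtain ⟨s, Cp, Dp, hCC, hDD, hCD, hV, hA⟩ := hbilevel
  have hn := nodup_blockRanking hCC hDD hCD
  have hn' := nodup_blockRanking hDD hCC fun i j => (hCD j i).symm
  have hr : IsRanking V (blockRanking Cp Dp) := ⟨hn, toFinset_blockRanking.trans hV⟩
  have hr' : IsRanking V (blockRanking Dp Cp) :=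
    ⟨hn', by rw [toFinset_blockRanking, union_comm, hV]⟩
  refine ⟨[blockRanking Cp Dp, (blockRanking Dp Cp).reverse], rfl, ?_, fun u hu v hv huv => ?_⟩
  · simp [IsProfile, hr, hr'.reverse]
  rw [majWeight_pair hr hr'.reverse hu hv huv]
  simp only [List.pair_sublist_reverse_iff, hA,
    ← pair_sublist_blockRanking_and_swap_iff hn hn' (hr.mem_iff.2 hu) (hr.mem_iff.2 hv) huv,
    ← pair_sublist_blockRanking_and_swap_iff hn hn' (hr.mem_iff.2 hv) (hr.mem_iff.2 hu) huv.symm]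
end

section
/- Let φ be a CNF formula with clause set F = {c_1, …, c_m} (each clause containing at most three literals) over variables X = {x_1, …, x_n}, such that every literal appears in exactly two clauses, and let L = X ∪ X̄ be the set of literals. Consider the ranking profile over candidate set C = {d, w} ∪ F ∪ L consisting of: 100 voters with ranking d ≻ ⋯; 99 voters with ranking w ≻ d ≻ ⋯; for each j ∈ [m], 98 voters with ranking c_j ≻ w ≻ d ≻ ⋯; for each literal ℓ ∈ L, 60 voters with ranking ℓ ≻ ℓ̄ ≻ w ≻ d ≻ ⋯; and for each literal ℓ ∈ L and each clause c_j containing ℓ, 2 voters with ranking ℓ ≻ c_j ≻ w ≻ d ≻ ⋯; where in each case ⋯ stands for an arbitrary completion with the remaining candidates. Then d is ranked first in some ranking selected by Sequential-Plurality-Loser (STV) on this profile if and only if φ is satisfiable. -/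
/-!
While `w` is still present, `d` is the favourite of exactly its own 100 voters and `w` of at least
its 99; a clause candidate is the favourite of 98 voters plus 2 for each of its eliminated literals,
and a literal of 64 voters, or of 124 once its negation is eliminated. So if `w` is eliminated
while `d` remains, no clause and no complementary pair of literals is gone yet (either would give
`w` at least 159 first places), and every clause has lost a literal; making `x` true exactly when
its positive literal is gone then satisfies every clause. Conversely, for a satisfying assignment,
eliminate the true literals (64 each), then `w` (99, against at least 100 for every clause and 124
for every remaining literal); from then on `d` holds at least 199 first places and every other
candidate at most 124 (a clause has at most three literals), so `d` can be kept to the end.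
-/

open Finset

variable {α : Type*}

/-- The Plurality scoring system `(1,0,…,0)`. -/
def pluralityS : ScoringSystem := fun _ i => if i = 1 then (1 : ℝ) else 0

namespace List

variable {β ι : Type*}

lemma countP_or_eq_add {l : List β} {p q : β → Bool}
    (h : ∀ a ∈ l, p a → q a → False) :
    l.countP (fun a => p a || q a) = l.countP p + l.countP q := by
  induction l with
  | nil => rfl
  | cons a l ih =>
    simp only [countP_cons, ih fun b hb => h b (mem_cons_of_mem _ hb)]
    have := h a mem_cons_self
    cases hp : p a <;> cases hq : q a <;> simp [hp, hq] at this ⊢ <;> omega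

lemma countP_add_countP_le {l : List β} {p q r : β → Bool}
    (h : ∀ a ∈ l, p a → q a → False) (hp : ∀ a ∈ l, p a → r a) (hq : ∀ a ∈ l, q a → r a) :
    l.countP p + l.countP q ≤ l.countP r := by
  rw [← countP_or_eq_add h]
  refine countP_mono_left fun a ha hpq => ?_
  rcases Bool.or_eq_true_iff.1 hpq with h' | h'
  exacts [hp a ha h', hq a ha h']

lemma countP_exists_mem_eq_sum [DecidableEq ι] (T : Finset ι) (p : ι → β → Bool) (l : List β)
    [∀ a, Decidable (∃ i ∈ T, p i a)] (h : ∀ a ∈ l, ∀ i ∈ T, ∀ j ∈ T, p i a → p j a → i = j) :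
    l.countP (fun a => decide (∃ i ∈ T, p i a)) = ∑ i ∈ T, l.countP (p i) := by
  revert h ‹∀ a, Decidable (∃ i ∈ T, p i a)›
  induction T using Finset.induction with
  | empty => intro _ _; simp
  | insert j T hj ih =>
    intro _ h
    have hT : ∀ a ∈ l, ∀ i ∈ T, ∀ k ∈ T, p i a → p k a → i = k := fun a ha i hi k hk =>
      h a ha i (Finset.mem_insert_of_mem hi) k (Finset.mem_insert_of_mem hk)
    rw [Finset.sum_insert hj, ← ih hT, ← countP_or_eq_add]
    · refine countP_congr fun a _ => ?_
      simp [or_and_right, exists_or]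
    · intro a ha hja hTa
      obtain ⟨i, hi, hia⟩ := of_decide_eq_true hTa
      have := h a ha j (Finset.mem_insert_self _ _) i (Finset.mem_insert_of_mem hi) hja hia
      exact hj (this ▸ hi)

lemma exists_eq_append_of_take_eq {r l : List β} {k : ℕ} (h : r.take k = l) :
    ∃ t, r = l ++ t :=
  ⟨r.drop k, by conv_lhs => rw [← take_append_drop k r, h]⟩

end List

section SequentialLoser

variable [DecidableEq α]

def firstIn (D : Finset α) (r : List α) : Option α :=
  (r.filter (· ∈ D)).head?

@[simp] lemma firstIn_cons_eq_some {D : Finset α} {a c : α} {l : List α} :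
    firstIn D (a :: l) = some c ↔ a ∈ D ∧ a = c ∨ a ∉ D ∧ firstIn D l = some c := by
  by_cases h : a ∈ D <;> simp [firstIn, h]

lemma countP_take_le_countP_firstIn {D : Finset α} {P : List (List α)} {π : List α} {c : α}
    (h : ∀ t, firstIn D (π ++ t) = some c) :
    P.countP (fun r => r.take π.length = π) ≤ P.countP (firstIn D · = some c) := by
  refine List.countP_mono_left fun r _ hr => ?_
  obtain ⟨t, rfl⟩ := List.exists_eq_append_of_take_eq (of_decide_eq_true hr)
  simp [h]

lemma add_countP_take_le_countP_firstIn {D : Finset α} {P : List (List α)} {π₁ π₂ : List α}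
    {c : α} (hne : ∀ t₁ t₂, π₁ ++ t₁ ≠ π₂ ++ t₂) (h₁ : ∀ t, firstIn D (π₁ ++ t) = some c)
    (h₂ : ∀ t, firstIn D (π₂ ++ t) = some c) :
    P.countP (fun r => r.take π₁.length = π₁) + P.countP (fun r => r.take π₂.length = π₂) ≤
      P.countP (firstIn D · = some c) := by
  refine List.countP_add_countP_le (fun r _ hr₁ hr₂ => ?_) (fun r _ hr => ?_) (fun r _ hr => ?_)
  · obtain ⟨t₁, rfl⟩ := List.exists_eq_append_of_take_eq (of_decide_eq_true hr₁)
    obtain ⟨t₂, ht₂⟩ := List.exists_eq_append_of_take_eq (of_decide_eq_true hr₂)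
    exact hne t₁ t₂ ht₂
  · obtain ⟨t, rfl⟩ := List.exists_eq_append_of_take_eq (of_decide_eq_true hr)
    simp [h₁]
  · obtain ⟨t, rfl⟩ := List.exists_eq_append_of_take_eq (of_decide_eq_true hr)
    simp [h₂]

lemma pluralityS_rpos (k : ℕ) {r : List α} (hr : r ≠ []) (c : α) :
    pluralityS k (rpos r c) = if r.head? = some c then 1 else 0 := by
  obtain ⟨a, l, rfl⟩ := List.exists_cons_of_ne_nil hr
  by_cases hac : a = c <;> simp [pluralityS, rpos, hac]

lemma scoreOf_pluralityS_restrictProfile {D : Finset α} {P : List (List α)}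
    (hP : ∀ r ∈ P, ∃ x ∈ r, x ∈ D) (c : α) :
    scoreOf pluralityS D (restrictProfile D P) c = P.countP (firstIn D · = some c) := by
  induction P with
  | nil => simp [scoreOf, restrictProfile]
  | cons r P ih =>
    have hr : r.filter (· ∈ D) ≠ [] := by
      obtain ⟨x, hxr, hxD⟩ := hP r List.mem_cons_self
      exact List.ne_nil_of_mem (List.mem_filter.2 ⟨hxr, by simpa using hxD⟩)
    have ih := ih fun r' hr' => hP r' (List.mem_cons_of_mem _ hr')
    simp only [scoreOf, restrictProfile, List.map_cons, List.sum_cons, List.countP_cons] at ih ⊢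
    rw [ih, pluralityS_rpos _ hr]
    change (if firstIn D r = some c then (1 : ℝ) else 0) + _ = _
    by_cases h : firstIn D r = some c <;> simp [h, add_comm]

lemma isLoser_pluralityS_restrictProfile_iff {D : Finset α} {P : List (List α)}
    (hP : ∀ r ∈ P, ∃ x ∈ r, x ∈ D) (c : α) :
    IsLoser pluralityS D (restrictProfile D P) c ↔
      c ∈ D ∧ ∀ c' ∈ D, P.countP (firstIn D · = some c) ≤ P.countP (firstIn D · = some c') := by
  simp only [IsLoser, scoreOf_pluralityS_restrictProfile hP, Nat.cast_le]

lemma restrictProfile_restrictProfile {D' D : Finset α} (h : D' ⊆ D) (P : List (List α)) :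
    restrictProfile D' (restrictProfile D P) = restrictProfile D' P := by
  simp only [restrictProfile, List.map_map, Function.comp_def, List.filter_filter]
  refine List.map_congr_left fun r _ => List.filter_congr fun x _ => ?_
  by_cases hx : x ∈ D'
  · simp [hx, h hx]
  · simp [hx]

lemma restrictProfile_eq_self {C : Finset α} {P : List (List α)} (hP : IsProfile C P) :
    restrictProfile C P = P := by
  refine (List.map_congr_left fun r hr => List.filter_eq_self.2 fun x hx => ?_).trans P.map_id
  simpa [← (hP r hr).2] using hx

variable (s : ScoringSystem) (P : List (List α))

/-- `e` lists the candidates of `D` in an order in which Sequential-`s`-Loser, applied to the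
restriction of `P` to `D`, may eliminate them. -/
def LoserRun (D : Finset α) (e : List α) : Prop :=
  SeqLoserSel s e D (restrictProfile D P)

variable {s P}

lemma loserRun_cons {D : Finset α} {c : α} {e : List α} :
    LoserRun s P D (c :: e) ↔
      IsLoser s D (restrictProfile D P) c ∧ LoserRun s P (D.erase c) e := by
  simp only [LoserRun, SeqLoserSel, restrictProfile_restrictProfile (D.erase_subset c)]

lemma LoserRun.drop_append {D : Finset α} {e₁ e₂ : List α} (h : LoserRun s P D (e₁ ++ e₂)) :
    LoserRun s P (D \ e₁.toFinset) e₂ := by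
  induction e₁ generalizing D with
  | nil => simpa using h
  | cons a e₁ ih =>
    have := ih (loserRun_cons.1 h).2
    rwa [Finset.erase_sdiff_comm, ← Finset.sdiff_insert, ← List.toFinset_cons] at this

lemma LoserRun.nodup_and_toFinset_eq {D : Finset α} {e : List α} (h : LoserRun s P D e) :
    e.Nodup ∧ e.toFinset = D := by
  induction e generalizing D with
  | nil => simpa [LoserRun, SeqLoserSel, eq_comm] using h
  | cons c e ih =>
    obtain ⟨⟨hc, -⟩, hrun⟩ := loserRun_cons.1 h
    obtain ⟨hnd, hfin⟩ := ih hrun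
    refine ⟨List.nodup_cons.2 ⟨fun hce => ?_, hnd⟩, ?_⟩
    · simpa [hfin] using List.mem_toFinset.2 hce
    · rw [List.toFinset_cons, hfin, Finset.insert_erase hc]

lemma loserRun_singleton (d : α) : LoserRun s P {d} [d] :=
  loserRun_cons.2 ⟨⟨Finset.mem_singleton_self d, by simp⟩, by simp [LoserRun, SeqLoserSel]⟩

lemma exists_loserRun_of_invariant {I : Finset α → Prop} {d : α}
    (hstep : ∀ D, I D → D ≠ {d} →
      ∃ c ∈ D, IsLoser s D (restrictProfile D P) c ∧ I (D.erase c))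
    {D : Finset α} (hD : I D) : ∃ e, LoserRun s P D (e ++ [d]) := by
  induction D using Finset.strongInduction with
  | H D ih =>
    by_cases hsingle : D = {d}
    · exact ⟨[], hsingle ▸ loserRun_singleton d⟩
    · obtain ⟨c, hc, hloser, hI⟩ := hstep D hD hsingle
      obtain ⟨e, he⟩ := ih _ (Finset.erase_ssubset hc) hI
      exact ⟨c :: e, loserRun_cons.2 ⟨hloser, he⟩⟩

lemma LoserRun.exists_isLoser_of_mem {D : Finset α} {e : List α} {c d : α}
    (h : LoserRun s P D (e ++ [d])) (hc : c ∈ D) (hcd : c ≠ d) :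
    ∃ D', d ∈ D' ∧ IsLoser s D' (restrictProfile D' P) c := by
  obtain ⟨hnd, hfin⟩ := h.nodup_and_toFinset_eq
  obtain ⟨e₁, e₂, rfl⟩ := List.append_of_mem (by simpa [← hfin, hcd] using hc : c ∈ e)
  have hd : d ∉ e₁ := fun hd =>
    (List.nodup_append.1 (by simpa using hnd)).2.2 d hd d (by simp) rfl
  refine ⟨D \ e₁.toFinset, Finset.mem_sdiff.2 ⟨?_, by simpa using hd⟩,
    (loserRun_cons.1 (LoserRun.drop_append (e₁ := e₁) (by simpa using h))).1⟩
  simp [← hfin]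

lemma seqLoser_iff_loserRun {C : Finset α} (hP : IsProfile C P) {r : List α} :
    SeqLoser s C P r ↔ LoserRun s P C r.reverse := by
  rw [SeqLoser, LoserRun, restrictProfile_eq_self hP]

end SequentialLoser

/-- The hypotheses of `stv_winner_iff_satisfiable`, bundled. -/
structure STVReduction (α : Type*) [DecidableEq α] (n m : ℕ) where
  Cl : Fin m → Finset (Fin n × Bool)
  hCl3 : ∀ j, (Cl j).card ≤ 3
  hTwice : ∀ ℓ : Fin n × Bool, (Finset.univ.filter fun j => ℓ ∈ Cl j).card = 2
  d : α
  w : α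
  cl : Fin m → α
  lit : Fin n × Bool → α
  hdw : d ≠ w
  hclinj : Function.Injective cl
  hlitinj : Function.Injective lit
  hcld : ∀ j, cl j ≠ d
  hclw : ∀ j, cl j ≠ w
  hlitd : ∀ ℓ, lit ℓ ≠ d
  hlitw : ∀ ℓ, lit ℓ ≠ w
  hcllit : ∀ j ℓ, cl j ≠ lit ℓ
  C : Finset α
  hC : C = insert d (insert w (Finset.univ.image cl ∪ Finset.univ.image lit))
  P : List (List α)
  hP : IsProfile C P
  hforms : ∀ r ∈ P,
      (∃ t, r = d :: t) ∨
      (∃ t, r = w :: d :: t) ∨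
      (∃ (j : Fin m) (t : List α), r = cl j :: w :: d :: t) ∨
      (∃ (ℓ : Fin n × Bool) (t : List α),
        r = lit ℓ :: lit (ℓ.1, !ℓ.2) :: w :: d :: t) ∨
      (∃ (ℓ : Fin n × Bool) (j : Fin m) (t : List α),
        ℓ ∈ Cl j ∧ r = lit ℓ :: cl j :: w :: d :: t)
  h1 : P.countP (fun r => decide (r.take 1 = [d])) = 100
  h2 : P.countP (fun r => decide (r.take 2 = [w, d])) = 99
  h3 : ∀ j : Fin m, P.countP (fun r => decide (r.take 3 = [cl j, w, d])) = 98
  h4 : ∀ ℓ : Fin n × Bool,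
      P.countP (fun r => decide (r.take 4 = [lit ℓ, lit (ℓ.1, !ℓ.2), w, d])) = 60
  h5 : ∀ (ℓ : Fin n × Bool) (j : Fin m), ℓ ∈ Cl j →
      P.countP (fun r => decide (r.take 4 = [lit ℓ, cl j, w, d])) = 2

namespace STVReduction

variable {α : Type*} [DecidableEq α] {n m : ℕ} (S : STVReduction α n m) {D : Finset α}

@[simp] lemma d_ne_w : S.d ≠ S.w := S.hdw
@[simp] lemma w_ne_d : S.w ≠ S.d := S.hdw.symm
@[simp] lemma cl_ne_d (j : Fin m) : S.cl j ≠ S.d := S.hcld j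
@[simp] lemma d_ne_cl (j : Fin m) : S.d ≠ S.cl j := (S.hcld j).symm
@[simp] lemma cl_ne_w (j : Fin m) : S.cl j ≠ S.w := S.hclw j
@[simp] lemma w_ne_cl (j : Fin m) : S.w ≠ S.cl j := (S.hclw j).symm
@[simp] lemma lit_ne_d (ℓ : Fin n × Bool) : S.lit ℓ ≠ S.d := S.hlitd ℓ
@[simp] lemma d_ne_lit (ℓ : Fin n × Bool) : S.d ≠ S.lit ℓ := (S.hlitd ℓ).symm
@[simp] lemma lit_ne_w (ℓ : Fin n × Bool) : S.lit ℓ ≠ S.w := S.hlitw ℓ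
@[simp] lemma w_ne_lit (ℓ : Fin n × Bool) : S.w ≠ S.lit ℓ := (S.hlitw ℓ).symm
@[simp] lemma cl_ne_lit (j : Fin m) (ℓ : Fin n × Bool) : S.cl j ≠ S.lit ℓ := S.hcllit j ℓ
@[simp] lemma lit_ne_cl (ℓ : Fin n × Bool) (j : Fin m) : S.lit ℓ ≠ S.cl j := (S.hcllit j ℓ).symm
@[simp] lemma cl_inj {i j : Fin m} : S.cl i = S.cl j ↔ i = j := S.hclinj.eq_iff
@[simp] lemma lit_inj {ℓ ℓ' : Fin n × Bool} : S.lit ℓ = S.lit ℓ' ↔ ℓ = ℓ' := S.hlitinj.eq_iff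

lemma mem_C {c : α} : c ∈ S.C ↔ c = S.d ∨ c = S.w ∨ (∃ j, c = S.cl j) ∨ ∃ ℓ, c = S.lit ℓ := by
  simp [S.hC, eq_comm]

lemma d_mem_C : S.d ∈ S.C := S.mem_C.2 (Or.inl rfl)
lemma w_mem_C : S.w ∈ S.C := S.mem_C.2 (Or.inr (Or.inl rfl))
lemma cl_mem_C (j : Fin m) : S.cl j ∈ S.C := S.mem_C.2 (Or.inr (Or.inr (Or.inl ⟨j, rfl⟩)))
lemma lit_mem_C (ℓ : Fin n × Bool) : S.lit ℓ ∈ S.C := S.mem_C.2 (Or.inr (Or.inr (Or.inr ⟨ℓ, rfl⟩)))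

lemma exists_mem_of_d_mem (hd : S.d ∈ D) : ∀ r ∈ S.P, ∃ x ∈ r, x ∈ D :=
  fun r hr => ⟨S.d, List.mem_toFinset.1 ((S.hP r hr).2 ▸ S.d_mem_C), hd⟩

def score (D : Finset α) (c : α) : ℕ :=
  S.P.countP (firstIn D · = some c)

def Satisfies (v : Fin n → Bool) : Prop :=
  ∀ j, ∃ ℓ ∈ S.Cl j, v ℓ.1 = ℓ.2

lemma isLoser_iff (hd : S.d ∈ D) {c : α} :
    IsLoser pluralityS D (restrictProfile D S.P) c ↔
      c ∈ D ∧ ∀ c' ∈ D, S.score D c ≤ S.score D c' :=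
  isLoser_pluralityS_restrictProfile_iff (S.exists_mem_of_d_mem hd) c

lemma le_score_w (hw : S.w ∈ D) : 99 ≤ S.score D S.w :=
  S.h2 ▸ countP_take_le_countP_firstIn (π := [S.w, S.d]) (by simp [hw])

lemma le_score_d_of_w_notMem (hd : S.d ∈ D) (hw : S.w ∉ D) : 199 ≤ S.score D S.d :=
  (S.h1 ▸ S.h2 ▸ add_countP_take_le_countP_firstIn (π₁ := [S.d]) (π₂ := [S.w, S.d])
    (by simp) (by simp [hd]) (by simp [hd, hw]) : 100 + 99 ≤ _)

lemma le_score_w_of_cl_notMem (hw : S.w ∈ D) {j : Fin m} (hj : S.cl j ∉ D) :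
    197 ≤ S.score D S.w :=
  (S.h2 ▸ S.h3 j ▸ add_countP_take_le_countP_firstIn (π₁ := [S.w, S.d])
    (π₂ := [S.cl j, S.w, S.d]) (by simp) (by simp [hw])
    (by simp [hw, hj]) : 99 + 98 ≤ _)

lemma le_score_w_of_lit_notMem (hw : S.w ∈ D) {ℓ : Fin n × Bool} (hℓ : S.lit ℓ ∉ D)
    (hℓ' : S.lit (ℓ.1, !ℓ.2) ∉ D) : 159 ≤ S.score D S.w :=
  (S.h2 ▸ S.h4 ℓ ▸ add_countP_take_le_countP_firstIn (π₁ := [S.w, S.d])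
    (π₂ := [S.lit ℓ, S.lit (ℓ.1, !ℓ.2), S.w, S.d]) (by simp) (by simp [hw])
    (by simp [hw, hℓ, hℓ']) : 99 + 60 ≤ _)

lemma score_d (hd : S.d ∈ D) (hw : S.w ∈ D) : S.score D S.d = 100 := by
  rw [score, ← S.h1]
  refine List.countP_congr fun r hr => ?_
  rcases S.hforms r hr with ⟨t, rfl⟩ | ⟨t, rfl⟩ | ⟨j, t, rfl⟩ | ⟨ℓ, t, rfl⟩ | ⟨ℓ, j, t, -, rfl⟩ <;>
    simp [hd, hw]

lemma score_cl (hd : S.d ∈ D) {j : Fin m} (hj : S.cl j ∈ D) :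
    S.score D (S.cl j) = 98 + 2 * ((S.Cl j).filter (S.lit · ∉ D)).card := by
  set F := (S.Cl j).filter (S.lit · ∉ D)
  have hsplit : S.score D (S.cl j) = S.P.countP (fun r =>
      decide (r.take 3 = [S.cl j, S.w, S.d]) ||
      decide (∃ ℓ ∈ F, decide (r.take 4 = [S.lit ℓ, S.cl j, S.w, S.d]))) := by
    refine List.countP_congr fun r hr => ?_
    rcases S.hforms r hr with
      ⟨t, rfl⟩ | ⟨t, rfl⟩ | ⟨i, t, rfl⟩ | ⟨ℓ, t, rfl⟩ | ⟨ℓ, i, t, hℓ, rfl⟩ <;>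
      simp [hd, F, -Prod.exists] <;> grind
  rw [hsplit, List.countP_or_eq_add, S.h3 j, List.countP_exists_mem_eq_sum,
    Finset.sum_congr rfl fun ℓ hℓ => S.h5 ℓ j (Finset.mem_filter.1 hℓ).1, Finset.sum_const,
    smul_eq_mul, mul_comm]
  · intro r _ ℓ _ ℓ' _ h h'
    obtain ⟨t, rfl⟩ := List.exists_eq_append_of_take_eq (of_decide_eq_true h)
    simpa using of_decide_eq_true h'
  · intro r _ h h'
    obtain ⟨t, rfl⟩ := List.exists_eq_append_of_take_eq (of_decide_eq_true h)
    simp at h'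

lemma score_w (hd : S.d ∈ D) (hw : S.w ∈ D) (hcl : ∀ j, S.cl j ∈ D)
    (hlit : ∀ ℓ : Fin n × Bool, S.lit ℓ ∈ D ∨ S.lit (ℓ.1, !ℓ.2) ∈ D) :
    S.score D S.w = 99 := by
  rw [score, ← S.h2]
  refine List.countP_congr fun r hr => ?_
  rcases S.hforms r hr with ⟨t, rfl⟩ | ⟨t, rfl⟩ | ⟨j, t, rfl⟩ | ⟨ℓ, t, rfl⟩ | ⟨ℓ, j, t, -, rfl⟩ <;>
    simp [hd, hw, hcl]
  grind

lemma score_lit (hd : S.d ∈ D) {ℓ : Fin n × Bool} (hℓ : S.lit ℓ ∈ D) :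
    S.score D (S.lit ℓ) = if S.lit (ℓ.1, !ℓ.2) ∈ D then 64 else 124 := by
  set T := Finset.univ.filter (ℓ ∈ S.Cl ·)
  have hsplit : S.score D (S.lit ℓ) = S.P.countP (fun r =>
      decide (r.take 4 = [S.lit ℓ, S.lit (ℓ.1, !ℓ.2), S.w, S.d]) ||
      (decide (S.lit (ℓ.1, !ℓ.2) ∉ D) &&
        decide (r.take 4 = [S.lit (ℓ.1, !ℓ.2), S.lit ℓ, S.w, S.d]) ||
      decide (∃ j ∈ T, decide (r.take 4 = [S.lit ℓ, S.cl j, S.w, S.d])))) := by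
    refine List.countP_congr fun r hr => ?_
    obtain ⟨x, b⟩ := ℓ
    rcases S.hforms r hr with
      ⟨t, rfl⟩ | ⟨t, rfl⟩ | ⟨i, t, rfl⟩ | ⟨⟨y, c⟩, t, rfl⟩ | ⟨ℓ', i, t, hℓ', rfl⟩ <;>
      simp [hd, T, -Prod.exists] <;> cases b <;> grind
  have hneg : ((ℓ.1, !ℓ.2).1, !(ℓ.1, !ℓ.2).2) = ℓ := by simp
  have hpartner : S.P.countP (fun r => decide (S.lit (ℓ.1, !ℓ.2) ∉ D) &&
      decide (r.take 4 = [S.lit (ℓ.1, !ℓ.2), S.lit ℓ, S.w, S.d])) =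
      if S.lit (ℓ.1, !ℓ.2) ∈ D then 0 else 60 := by
    split_ifs with h
    · simp [h]
    · simpa [h, hneg] using S.h4 (ℓ.1, !ℓ.2)
  have hocc : S.P.countP (fun r =>
      decide (∃ j ∈ T, decide (r.take 4 = [S.lit ℓ, S.cl j, S.w, S.d]))) = 4 := by
    rw [List.countP_exists_mem_eq_sum,
      Finset.sum_congr rfl fun j hj => S.h5 ℓ j (Finset.mem_filter.1 hj).2, Finset.sum_const,
      S.hTwice ℓ, smul_eq_mul]
    intro r _ i _ j _ h h'
    obtain ⟨t, rfl⟩ := List.exists_eq_append_of_take_eq (of_decide_eq_true h)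
    simpa using of_decide_eq_true h'
  rw [hsplit, List.countP_or_eq_add, List.countP_or_eq_add, S.h4, hpartner, hocc]
  · split_ifs <;> rfl
  · intro r _ h h'
    obtain ⟨-, h⟩ := Bool.and_eq_true_iff.1 h
    obtain ⟨t, rfl⟩ := List.exists_eq_append_of_take_eq (of_decide_eq_true h)
    simp [Prod.ext_iff] at h'
  · intro r _ h h'
    obtain ⟨t, rfl⟩ := List.exists_eq_append_of_take_eq (of_decide_eq_true h)
    simp [Prod.ext_iff] at h'

lemma score_le_of_ne_d_of_ne_w (hd : S.d ∈ D) {c : α} (hc : c ∈ D) (hcC : c ∈ S.C) (hcd : c ≠ S.d)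
    (hcw : c ≠ S.w) : S.score D c ≤ 124 := by
  rcases S.mem_C.1 hcC with rfl | rfl | ⟨j, rfl⟩ | ⟨ℓ, rfl⟩
  · exact absurd rfl hcd
  · exact absurd rfl hcw
  · have := (Finset.card_filter_le (S.Cl j) (S.lit · ∉ D)).trans (S.hCl3 j)
    rw [S.score_cl hd hc]
    omega
  · rw [S.score_lit hd hc]
    split_ifs <;> omega

lemma isLoser_lit (hD : D ⊆ S.C) (hd : S.d ∈ D) (hw : S.w ∈ D) {ℓ : Fin n × Bool}
    (hℓ : S.lit ℓ ∈ D) (hℓ' : S.lit (ℓ.1, !ℓ.2) ∈ D) :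
    IsLoser pluralityS D (restrictProfile D S.P) (S.lit ℓ) := by
  refine (S.isLoser_iff hd).2 ⟨hℓ, fun c hc => ?_⟩
  rw [S.score_lit hd hℓ, if_pos hℓ']
  rcases S.mem_C.1 (hD hc) with rfl | rfl | ⟨j, rfl⟩ | ⟨ℓ', rfl⟩
  · rw [S.score_d hd hw]; omega
  · have := S.le_score_w hw; omega
  · rw [S.score_cl hd hc]; omega
  · rw [S.score_lit hd hc]; split_ifs <;> omega

lemma isLoser_w {v : Fin n → Bool} (hv : S.Satisfies v) (hD : D ⊆ S.C)
    (hd : S.d ∈ D) (hw : S.w ∈ D) (hcl : ∀ j, S.cl j ∈ D) (htrue : ∀ x, S.lit (x, v x) ∉ D)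
    (hfalse : ∀ x, S.lit (x, !v x) ∈ D) :
    IsLoser pluralityS D (restrictProfile D S.P) S.w := by
  have hlit : ∀ ℓ : Fin n × Bool, S.lit ℓ ∈ D ↔ ℓ.2 = !v ℓ.1 := by
    rintro ⟨x, b⟩
    rcases Bool.eq_or_eq_not b (v x) with rfl | rfl <;> simp [htrue, hfalse]
  refine (S.isLoser_iff hd).2 ⟨hw, fun c hc => ?_⟩
  rw [S.score_w hd hw hcl fun ℓ => by simpa [hlit] using (Bool.eq_or_eq_not ℓ.2 (v ℓ.1)).symm]
  rcases S.mem_C.1 (hD hc) with rfl | rfl | ⟨j, rfl⟩ | ⟨ℓ, rfl⟩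
  · rw [S.score_d hd hw]; omega
  · exact S.le_score_w hw
  · obtain ⟨ℓ, hℓj, hℓv⟩ := hv j
    have : 0 < ((S.Cl j).filter (S.lit · ∉ D)).card :=
      Finset.card_pos.2 ⟨ℓ, Finset.mem_filter.2 ⟨hℓj, by simp [hlit, ← hℓv]⟩⟩
    rw [S.score_cl hd hc]; omega
  · rw [S.score_lit hd hc, if_neg (by rw [hlit] at hc ⊢; simp [hc])]; omega

lemma exists_isLoser_of_w_notMem (hD : D ⊆ S.C) (hd : S.d ∈ D) (hw : S.w ∉ D) (hne : D ≠ {S.d}) :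
    ∃ c ∈ D, c ≠ S.d ∧ IsLoser pluralityS D (restrictProfile D S.P) c := by
  have hne' : (D.erase S.d).Nonempty := by
    simpa [Finset.nonempty_iff_ne_empty, Finset.erase_eq_empty_iff, hne] using
      Finset.ne_empty_of_mem hd
  obtain ⟨c, hc, hmin⟩ := (D.erase S.d).exists_min_image (S.score D) hne'
  obtain ⟨hcd, hcD⟩ := Finset.mem_erase.1 hc
  refine ⟨c, hcD, hcd, (S.isLoser_iff hd).2 ⟨hcD, fun c' hc' => ?_⟩⟩
  rcases eq_or_ne c' S.d with rfl | hc'd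
  · have := S.score_le_of_ne_d_of_ne_w hd hcD (hD hcD) hcd (ne_of_mem_of_not_mem hcD hw)
    have := S.le_score_d_of_w_notMem hd hw
    omega
  · exact hmin c' (Finset.mem_erase.2 ⟨hc'd, hc'⟩)

lemma satisfiable_of_isLoser_w (hd : S.d ∈ D)
    (hloser : IsLoser pluralityS D (restrictProfile D S.P) S.w) :
    ∃ v, S.Satisfies v := by
  obtain ⟨hw, hmin⟩ := (S.isLoser_iff hd).1 hloser
  have hw100 : S.score D S.w ≤ 100 := S.score_d hd hw ▸ hmin _ hd
  have hcl (j : Fin m) : S.cl j ∈ D := by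
    by_contra hj
    have := S.le_score_w_of_cl_notMem hw hj
    omega
  have hvar (x : Fin n) : S.lit (x, true) ∈ D ∨ S.lit (x, false) ∈ D := by
    by_contra! h
    have := S.le_score_w_of_lit_notMem hw (ℓ := (x, true)) h.1 h.2
    omega
  refine ⟨fun x => decide (S.lit (x, true) ∉ D), fun j => ?_⟩
  have hclj := hmin _ (hcl j)
  rw [S.score_cl hd (hcl j)] at hclj
  have := S.le_score_w hw
  obtain ⟨⟨x, b⟩, hℓ⟩ := Finset.card_pos.1 (by omega : 0 < ((S.Cl j).filter (S.lit · ∉ D)).card)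
  obtain ⟨hℓj, hℓD⟩ := Finset.mem_filter.1 hℓ
  refine ⟨(x, b), hℓj, ?_⟩
  cases b
  · simpa using (hvar x).resolve_right hℓD
  · simpa using hℓD

/-- The invariant of the elimination driven by a satisfying assignment `v`: as long as `w` is
present, only literals made true by `v` have been eliminated. -/
def Admissible (v : Fin n → Bool) (D : Finset α) : Prop :=
  D ⊆ S.C ∧ S.d ∈ D ∧ ((S.w ∈ D ∧ (∀ j, S.cl j ∈ D) ∧ ∀ x, S.lit (x, !v x) ∈ D) ∨ S.w ∉ D)

lemma admissible_C (v : Fin n → Bool) : S.Admissible v S.C :=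
  ⟨subset_rfl, S.d_mem_C, Or.inl ⟨S.w_mem_C, S.cl_mem_C, fun _ => S.lit_mem_C _⟩⟩

lemma Admissible.exists_isLoser {S : STVReduction α n m} {v : Fin n → Bool} (hv : S.Satisfies v)
    (hD : S.Admissible v D) (hne : D ≠ {S.d}) :
    ∃ c ∈ D, IsLoser pluralityS D (restrictProfile D S.P) c ∧ S.Admissible v (D.erase c) := by
  obtain ⟨hDC, hd, ⟨hw, hcl, hfalse⟩ | hw⟩ := hD
  · by_cases htrue : ∃ x, S.lit (x, v x) ∈ D
    · obtain ⟨x, hx⟩ := htrue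
      refine ⟨_, hx, S.isLoser_lit hDC hd hw hx (by simpa using hfalse x),
        (D.erase_subset _).trans hDC, by simp [hd], Or.inl ⟨by simp [hw], fun j => by simp [hcl],
        fun y => by rcases eq_or_ne y x with rfl | hyx <;> simp [*]⟩⟩
    · push Not at htrue
      exact ⟨S.w, hw, S.isLoser_w hv hDC hd hw hcl htrue hfalse, (D.erase_subset _).trans hDC,
        by simp [hd], Or.inr (by simp)⟩
  · obtain ⟨c, hc, hcd, hloser⟩ := S.exists_isLoser_of_w_notMem hDC hd hw hne
    exact ⟨c, hc, hloser, (D.erase_subset _).trans hDC, Finset.mem_erase.2 ⟨hcd.symm, hd⟩,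
      Or.inr fun h => hw (Finset.mem_of_mem_erase h)⟩

lemma exists_seqLoser_head_eq_d {v : Fin n → Bool} (hv : S.Satisfies v) :
    ∃ r, SeqLoser pluralityS S.C S.P r ∧ r.head? = some S.d := by
  obtain ⟨e, he⟩ := exists_loserRun_of_invariant (fun _ hD => hD.exists_isLoser hv)
    (S.admissible_C v)
  exact ⟨(e ++ [S.d]).reverse, (seqLoser_iff_loserRun S.hP).2 (by simpa using he), by simp⟩

end STVReduction

/-- correctness of the STV reduction from satisfiability.
Clauses are finsets of literals; a literal is a pair `(x, b) : Fin n × Bool`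
(`b = true` meaning the positive literal of variable `x`), and the negation of
`ℓ = (x, b)` is `(x, !b)`.  Given the described profile over the candidate set
`{d, w} ∪ {clause candidates} ∪ {literal candidates}`, the designated candidate `d`
is ranked first in some ranking selected by Sequential-Plurality-Loser (STV)
iff the formula is satisfiable. -/
theorem stv_winner_iff_satisfiable {α : Type*} [DecidableEq α] {n m : ℕ}
    (Cl : Fin m → Finset (Fin n × Bool))
    (hCl3 : ∀ j, (Cl j).card ≤ 3)
    (hTwice : ∀ ℓ : Fin n × Bool, (Finset.univ.filter fun j => ℓ ∈ Cl j).card = 2)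
    (d w : α) (cl : Fin m → α) (lit : Fin n × Bool → α)
    (hdw : d ≠ w)
    (hclinj : Function.Injective cl) (hlitinj : Function.Injective lit)
    (hcld : ∀ j, cl j ≠ d) (hclw : ∀ j, cl j ≠ w)
    (hlitd : ∀ ℓ, lit ℓ ≠ d) (hlitw : ∀ ℓ, lit ℓ ≠ w)
    (hcllit : ∀ j ℓ, cl j ≠ lit ℓ)
    (C : Finset α)
    (hC : C = insert d (insert w
      (Finset.univ.image cl ∪ Finset.univ.image lit)))
    (P : List (List α)) (hP : IsProfile C P)
    -- every voter has one of the five prescribed forms (arbitrary completions `t`):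
    (hforms : ∀ r ∈ P,
      (∃ t, r = d :: t) ∨
      (∃ t, r = w :: d :: t) ∨
      (∃ (j : Fin m) (t : List α), r = cl j :: w :: d :: t) ∨
      (∃ (ℓ : Fin n × Bool) (t : List α),
        r = lit ℓ :: lit (ℓ.1, !ℓ.2) :: w :: d :: t) ∨
      (∃ (ℓ : Fin n × Bool) (j : Fin m) (t : List α),
        ℓ ∈ Cl j ∧ r = lit ℓ :: cl j :: w :: d :: t))
    -- 100 voters `d ≻ ⋯`:
    (h1 : P.countP (fun r => decide (r.take 1 = [d])) = 100)
    -- 99 voters `w ≻ d ≻ ⋯`: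
    (h2 : P.countP (fun r => decide (r.take 2 = [w, d])) = 99)
    -- 98 voters `c_j ≻ w ≻ d ≻ ⋯` for each clause `j`:
    (h3 : ∀ j : Fin m, P.countP (fun r => decide (r.take 3 = [cl j, w, d])) = 98)
    -- 60 voters `ℓ ≻ ℓ̄ ≻ w ≻ d ≻ ⋯` for each literal `ℓ`:
    (h4 : ∀ ℓ : Fin n × Bool,
      P.countP (fun r => decide (r.take 4 = [lit ℓ, lit (ℓ.1, !ℓ.2), w, d])) = 60)
    -- 2 voters `ℓ ≻ c_j ≻ w ≻ d ≻ ⋯` for each literal `ℓ` and clause `j` containing `ℓ`: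
    (h5 : ∀ (ℓ : Fin n × Bool) (j : Fin m), ℓ ∈ Cl j →
      P.countP (fun r => decide (r.take 4 = [lit ℓ, cl j, w, d])) = 2) :
    (∃ r, SeqLoser pluralityS C P r ∧ r.head? = some d) ↔
      ∃ v : Fin n → Bool, ∀ j : Fin m, ∃ ℓ ∈ Cl j, v ℓ.1 = ℓ.2 := by
  let S : STVReduction α n m := ⟨Cl, hCl3, hTwice, d, w, cl, lit, hdw, hclinj, hlitinj, hcld, hclw,
    hlitd, hlitw, hcllit, C, hC, P, hP, hforms, h1, h2, h3, h4, h5⟩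
  constructor
  · rintro ⟨r, hr, hhead⟩
    obtain ⟨e, rfl⟩ := List.head?_eq_some_iff.1 hhead
    rw [seqLoser_iff_loserRun hP, List.reverse_cons] at hr
    obtain ⟨D, hd, hloser⟩ := hr.exists_isLoser_of_mem S.w_mem_C hdw.symm
    exact S.satisfiable_of_isLoser_w hd hloser
  · rintro ⟨v, hv⟩
    exact S.exists_seqLoser_head_eq_d hv
end

section
/- Sequential-Plurality-Winner copies majority rankings: for every ranking profile P = (≻_1, …, ≻_n) over a finite candidate set C, if there exists a ranking ≻ of C such that strictly more than n/2 of the voters report the ranking ≻, then Sequential-Plurality-Winner(P) = {≻}. -/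
open Finset

variable {α : Type*}

/-! The top candidate `c` of a majority ranking `r` is ranked first by more than half of the
voters, so it has Plurality score above `n/2`, while every other candidate is ranked first only
by voters outside that majority and scores below `n/2`; hence `c` is the unique Plurality-winner.
Deleting `c` from every ballot turns each copy of `r` into a copy of its tail, so the tail is a
majority ranking of the restricted profile and induction on `r` applies. -/

section

variable [DecidableEq α]

theorem seqWinner_nil {s : ScoringSystem} {C : Finset α} {P : List (List α)} :
    SeqWinner s C P [] ↔ C = ∅ :=
  Iff.rfl

theorem seqWinner_cons {s : ScoringSystem} {C : Finset α} {P : List (List α)} {c : α}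
    {q : List α} :
    SeqWinner s C P (c :: q) ↔
      IsWinner s C P c ∧ SeqWinner s (C.erase c) (restrictProfile (C.erase c) P) q :=
  Iff.rfl

namespace IsRanking

variable {C : Finset α} {c : α} {r : List α}

theorem eq_empty_of_nil (h : IsRanking C []) : C = ∅ := by
  simpa using h.2.symm

theorem head_mem (h : IsRanking C (c :: r)) : c ∈ C := by
  simp [← h.2]

theorem tail (h : IsRanking C (c :: r)) : IsRanking (C.erase c) r := by
  obtain ⟨hnd, rfl⟩ := h
  refine ⟨hnd.of_cons, ?_⟩
  rw [List.toFinset_cons, Finset.erase_insert (by simpa using (List.nodup_cons.mp hnd).1)]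

theorem filter_mem_erase_head (h : IsRanking C (c :: r)) :
    (c :: r).filter (fun x => decide (x ∈ C.erase c)) = r := by
  rw [List.filter_cons_of_neg (by simp), List.filter_eq_self]
  intro x hx
  simpa [← h.tail.2] using hx

end IsRanking

theorem count_le_count_restrictProfile (C' : Finset α) (P : List (List α)) (r : List α) :
    P.count r ≤ (restrictProfile C' P).count (r.filter fun x => decide (x ∈ C')) :=
  List.count_le_count_map

theorem scoreOf_pluralityS (C : Finset α) (P : List (List α)) (c : α) :
    scoreOf pluralityS C P c = P.countP (fun r => r.idxOf c = 0) := by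
  induction P with
  | nil => simp [scoreOf]
  | cons r P ih =>
    rw [scoreOf, List.map_cons, List.sum_cons, ← scoreOf, ih, List.countP_cons]
    by_cases h : r.idxOf c = 0 <;> simp [pluralityS, rpos, h, add_comm]

theorem count_le_scoreOf_pluralityS_head (C : Finset α) (P : List (List α)) (c : α)
    (rest : List α) :
    (P.count (c :: rest) : ℝ) ≤ scoreOf pluralityS C P c := by
  rw [scoreOf_pluralityS, List.count_eq_countP, Nat.cast_le]
  refine List.countP_mono_left fun r _ hr => ?_
  simp [eq_of_beq hr]

theorem scoreOf_pluralityS_add_count_le_length (C : Finset α) (P : List (List α)) {c d : α}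
    (rest : List α) (hdc : d ≠ c) :
    scoreOf pluralityS C P d + P.count (c :: rest) ≤ P.length := by
  have hcount : P.count (c :: rest) ≤ P.countP (fun r => ¬r.idxOf d = 0) := by
    rw [List.count_eq_countP]
    refine List.countP_mono_left fun r _ hr => ?_
    simp [eq_of_beq hr, hdc.symm]
  have hlen := List.length_eq_countP_add_countP (fun r => decide (r.idxOf d = 0)) (l := P)
  simp only [decide_eq_true_eq] at hlen
  rw [scoreOf_pluralityS]
  exact_mod_cast (by omega : P.countP (fun r => r.idxOf d = 0) + P.count (c :: rest) ≤ P.length)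

theorem isWinner_pluralityS_iff_of_majority {C : Finset α} {P : List (List α)} {c d : α}
    {rest : List α} (hc : c ∈ C) (hmaj : P.length < 2 * P.count (c :: rest)) :
    IsWinner pluralityS C P d ↔ d = c := by
  have hmaj' : (P.length : ℝ) < 2 * P.count (c :: rest) := by exact_mod_cast hmaj
  have hscore_c := count_le_scoreOf_pluralityS_head C P c rest
  constructor
  · rintro ⟨-, hd⟩
    by_contra hdc
    have := scoreOf_pluralityS_add_count_le_length C P rest hdc
    linarith [hd c hc]
  · rintro rfl
    refine ⟨hc, fun e _ => ?_⟩
    rcases eq_or_ne e d with rfl | hed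
    · exact le_rfl
    · linarith [scoreOf_pluralityS_add_count_le_length C P rest hed]

theorem majority_restrictProfile_tail {C : Finset α} {P : List (List α)} {c : α}
    {rest : List α} (hr : IsRanking C (c :: rest)) (hmaj : P.length < 2 * P.count (c :: rest)) :
    (restrictProfile (C.erase c) P).length < 2 * (restrictProfile (C.erase c) P).count rest := by
  have hcount := count_le_count_restrictProfile (C.erase c) P (c :: rest)
  rw [hr.filter_mem_erase_head] at hcount
  have hlen : (restrictProfile (C.erase c) P).length = P.length := List.length_map _
  omega

end

theorem seqPluralityWinner_copies_majority_general [DecidableEq α] (C : Finset α)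
    (P : List (List α))
    (r : List α) (hr : IsRanking C r)
    (hmaj : P.length < 2 * P.count r) :
    ∀ q, SeqWinner pluralityS C P q ↔ q = r := by
  induction r generalizing C P with
  | nil =>
    obtain rfl := hr.eq_empty_of_nil
    rintro (_ | ⟨d, q⟩)
    · simp [seqWinner_nil]
    · simp [seqWinner_cons, IsWinner]
  | cons c rest ih =>
    have hc := hr.head_mem
    have ih' := ih _ _ hr.tail (majority_restrictProfile_tail hr hmaj)
    rintro (_ | ⟨d, q⟩)
    · simpa [seqWinner_nil] using Finset.ne_empty_of_mem hc
    · rw [seqWinner_cons, isWinner_pluralityS_iff_of_majority hc hmaj, List.cons.injEq]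
      exact and_congr_right fun hdc => hdc ▸ ih' q

/-- Sequential-Plurality-Winner copies majority rankings:
if strictly more than half of the voters of `P` report the ranking `r`, then
Sequential-Plurality-Winner selects exactly the ranking `r` on `P`. -/
theorem seqPluralityWinner_copies_majority [DecidableEq α] (C : Finset α)
    (P : List (List α)) (hP : IsProfile C P)
    (r : List α) (hr : IsRanking C r)
    (hmaj : P.length < 2 * P.count r) :
    ∀ q, SeqWinner pluralityS C P q ↔ q = r :=
  seqPluralityWinner_copies_majority_general C P r hr hmaj
end
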